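/- Assume λ ≤ M. Then for every fixed q ∈ [0, M], the supremum over the ambiguity set is attained (as a supremum) on the restricted ambiguity set: sup_{F ∈ 𝒜_λ} (C_F(q) − C_F(q⋆_F)) = sup_{F ∈ ℬ_λ} (C_F(q) − C_F(q⋆_F)). -/

import Mathlib

open MeasureTheory Set

/-- Newsvendor cost of ordering quantity `q` under demand distribution `F`,
with underage cost `b` and overage cost `h`. -/
noncomputable def nvCost (b h : ℝ) (F : Measure ℝ) (q : ℝ) : ℝ :=
  ∫ x, (b * max (x - q) 0 + h * max (q - x) 0) ∂F

/-- Optimal newsvendor quantity: the `ρ`-th quantile of `F`. -/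
noncomputable def qStar (ρ : ℝ) (F : Measure ℝ) : ℝ :=
  sInf {q : ℝ | ρ ≤ (F (Iic q)).toReal}

/-- The set `𝒢` of admissible demand distributions: Borel probability measures on ℝ
supported on `[0, ∞)` with finite mean and optimal newsvendor quantity at most `M`. -/
def GoodDist (ρ M : ℝ) : Set (Measure ℝ) :=
  {F | IsProbabilityMeasure F ∧ F (Iio 0) = 0 ∧ Integrable id F ∧ qStar ρ F ≤ M}

/-- The ambiguity set `𝒜_λ`: all admissible distributions agreeing with `G` before `lam`. -/
def Ambig (ρ M : ℝ) (G : Measure ℝ) (lam : ℝ) : Set (Measure ℝ) :=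
  {F | F ∈ GoodDist ρ M ∧ ∀ x < lam, F (Iic x) = G (Iic x)}

/-- Worst-case regret of an ordering quantity `q` over the ambiguity set. -/
noncomputable def Regret (b h ρ M : ℝ) (G : Measure ℝ) (lam q : ℝ) : ℝ :=
  sSup ((fun F => nvCost b h F q - nvCost b h F (qStar ρ F)) '' Ambig ρ M G lam)

/-- Minimax risk `Δ`. -/
noncomputable def Risk (b h ρ M : ℝ) (G : Measure ℝ) (lam : ℝ) : ℝ :=
  sInf (Regret b h ρ M G lam '' Icc 0 M)

/-- The unidentifiable ordering quantity `q†_G`. -/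
noncomputable def qDagger (b h M : ℝ) (G : Measure ℝ) (lam : ℝ) : ℝ :=
  (b * M + h * lam - (b + h) * (G (Iio lam)).toReal * M) /
    ((b + h) * (1 - (G (Iio lam)).toReal))

/-- The two-point-tail distribution `F_p`: agrees with `G` on `[0, λ)`, places an atom
of mass `p` at `λ` and an atom of mass `1 - p - G⁻(λ)` at `M`. -/
noncomputable def Fp (G : Measure ℝ) (lam M p : ℝ) : Measure ℝ :=
  G.restrict (Iio lam) + ENNReal.ofReal p • Measure.dirac lam +
    ENNReal.ofReal (1 - p - (G (Iio lam)).toReal) • Measure.dirac M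

/-- The `N`-fold product (i.i.d.) measure of `G` (equal to `Measure.pi` whenever `G`
is sigma-finite, in particular for probability measures). -/
noncomputable def iidPi (N : ℕ) (G : Measure ℝ) : Measure (Fin N → ℝ) := by
  classical
  exact if h : SigmaFinite G then
    haveI := h
    Measure.pi fun _ => G
  else 0

/-!
By Fubini, `C_F(q₂) - C_F(q₁) = ∫_{q₁}^{q₂} ((b + h) F(t) - b) dt`, and the integrand is
nonnegative exactly for `t ≥ q⋆_F`; in particular `q⋆_F` minimises `C_F`. So the regret of `q`
under `F` is this integral from `q⋆_F` to `q`. If `q⋆_F ≤ q` it can only grow when the CDF is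
raised, and `F_p` with `p = 1 - G⁻(λ)` has the largest CDF in `𝒜_λ`; if `q < q⋆_F ≤ M` it can only
grow when the CDF is lowered on `[q, q⋆_F)`, and `F_0` has the smallest CDF on `(-∞, M)`. In both
cases replacing `q⋆_F` by the optimal quantity of the new distribution increases the regret further.
-/

open ProbabilityTheory Filter Topology

section NewsvendorCost

variable (b h : ℝ)

def nvLoss (q x : ℝ) : ℝ := b * max (x - q) 0 + h * max (q - x) 0

lemma nvCost_eq_integral_nvLoss (F : Measure ℝ) (q : ℝ) :
    nvCost b h F q = ∫ x, nvLoss b h q x ∂F := rfl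

lemma hasDerivWithinAt_nvLoss (x q : ℝ) :
    HasDerivWithinAt (nvLoss b h · x) (if x ≤ q then h else -b) (Ioi q) q := by
  unfold nvLoss
  split_ifs with hxq
  · have hlin : HasDerivWithinAt (fun s => h * (s - x)) h (Ici q) q := by
      simpa using (((hasDerivAt_id q).sub_const x).const_mul h).hasDerivWithinAt
    refine (hlin.congr_of_mem (fun s hs => ?_) self_mem_Ici).mono Ioi_subset_Ici_self
    rw [mem_Ici] at hs
    rw [max_eq_right (by linarith), max_eq_left (by linarith)]; ring
  · rw [not_le] at hxq
    have hlin : HasDerivAt (fun s => b * (x - s)) (-b) q := by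
      simpa using ((hasDerivAt_id q).const_sub x).const_mul b
    refine (hlin.congr_of_eventuallyEq ?_).hasDerivWithinAt
    filter_upwards [Iio_mem_nhds hxq] with s hs
    rw [mem_Iio] at hs
    rw [max_eq_left (by linarith), max_eq_right (by linarith)]; ring

lemma norm_step_le (x t : ℝ) : ‖if x ≤ t then h else -b‖ ≤ |b| + |h| := by
  split_ifs <;> simp only [Real.norm_eq_abs, abs_neg] <;> linarith [abs_nonneg b, abs_nonneg h]

lemma nvLoss_sub_nvLoss (x q₁ q₂ : ℝ) :
    nvLoss b h q₂ x - nvLoss b h q₁ x = ∫ t in q₁..q₂, if x ≤ t then h else -b := by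
  refine (intervalIntegral.integral_eq_sub_of_hasDeriv_right (by unfold nvLoss; fun_prop)
    (fun t _ => hasDerivWithinAt_nvLoss b h x t) ?_).symm
  have : IsFiniteMeasure (volume.restrict (uIoc q₁ q₂)) :=
    isFiniteMeasure_restrict.2 measure_Ioc_lt_top.ne
  rw [intervalIntegrable_iff]
  exact Integrable.of_bound
    (Measurable.ite measurableSet_Ici measurable_const measurable_const).aestronglyMeasurable
    _ (Eventually.of_forall fun t => norm_step_le b h x t)

lemma integral_step_eq_cdf (F : Measure ℝ) [IsProbabilityMeasure F] (t : ℝ) :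
    ∫ x, (if x ≤ t then h else -b) ∂F = (b + h) * cdf F t - b := by
  have hstep : (fun x : ℝ => if x ≤ t then h else -b)
      = fun x => (Iic t).indicator (fun _ => b + h) x - b := by
    ext x
    by_cases hxt : x ≤ t <;> simp [hxt]
  rw [hstep, integral_sub ((integrable_const _).indicator measurableSet_Iic) (integrable_const _),
    integral_indicator_const _ measurableSet_Iic, integral_const, cdf_eq_real]
  simp only [smul_eq_mul, probReal_univ]
  ring

lemma integrable_nvLoss {F : Measure ℝ} [IsFiniteMeasure F] (hF : Integrable id F) (q : ℝ) :
    Integrable (nvLoss b h q) F :=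
  ((hF.sub (integrable_const q)).pos_part.const_mul b).add
    (((integrable_const q).sub hF).pos_part.const_mul h)

theorem nvCost_sub_nvCost (F : Measure ℝ) [IsProbabilityMeasure F] (hF : Integrable id F)
    (q₁ q₂ : ℝ) :
    nvCost b h F q₂ - nvCost b h F q₁ = ∫ t in q₁..q₂, ((b + h) * cdf F t - b) := by
  have : IsFiniteMeasure (volume.restrict (uIoc q₁ q₂)) :=
    isFiniteMeasure_restrict.2 measure_Ioc_lt_top.ne
  have hstep : Integrable (Function.uncurry fun (t x : ℝ) => if x ≤ t then h else -b)
      ((volume.restrict (uIoc q₁ q₂)).prod F) :=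
    Integrable.of_bound (Measurable.ite (measurableSet_le measurable_snd measurable_fst)
      measurable_const measurable_const).aestronglyMeasurable
      _ (Eventually.of_forall fun p => norm_step_le b h p.2 p.1)
  calc nvCost b h F q₂ - nvCost b h F q₁
      = ∫ x, (∫ t in q₁..q₂, if x ≤ t then h else -b) ∂F := by
        rw [nvCost_eq_integral_nvLoss, nvCost_eq_integral_nvLoss,
          ← integral_sub (integrable_nvLoss b h hF q₂) (integrable_nvLoss b h hF q₁)]
        exact integral_congr_ae (Eventually.of_forall fun x => nvLoss_sub_nvLoss b h x q₁ q₂)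
    _ = ∫ t in q₁..q₂, ∫ x, (if x ≤ t then h else -b) ∂F :=
        (intervalIntegral_integral_swap hstep).symm
    _ = ∫ t in q₁..q₂, ((b + h) * cdf F t - b) := by
        simp only [integral_step_eq_cdf]

end NewsvendorCost

lemma intervalIntegrable_affine_cdf (b h : ℝ) (F : Measure ℝ) (a c : ℝ) :
    IntervalIntegrable (fun t => (b + h) * cdf F t - b) volume a c :=
  ((monotone_cdf F).intervalIntegrable.const_mul (b + h)).sub intervalIntegrable_const

section Quantile

variable {F : Measure ℝ} {ρ : ℝ}

lemma qStar_eq_sInf_cdf (ρ : ℝ) (F : Measure ℝ) [IsProbabilityMeasure F] :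
    qStar ρ F = sInf {q | ρ ≤ cdf F q} := by
  simp only [qStar, cdf_eq_real, measureReal_def]

lemma bddBelow_le_cdf (hρ : 0 < ρ) : BddBelow {q | ρ ≤ cdf F q} := by
  obtain ⟨x₀, hx₀⟩ := eventually_atBot.1 ((tendsto_cdf_atBot F).eventually (gt_mem_nhds hρ))
  refine ⟨x₀, fun q hq => ?_⟩
  by_contra! hlt
  exact (hx₀ q hlt.le).not_ge hq

lemma nonempty_le_cdf (hρ : ρ < 1) : {q | ρ ≤ cdf F q}.Nonempty :=
  ((tendsto_cdf_atTop F).eventually (le_mem_nhds hρ)).exists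

variable [IsProbabilityMeasure F]

lemma qStar_le_of_le_cdf (hρ : 0 < ρ) {t : ℝ} (ht : ρ ≤ cdf F t) : qStar ρ F ≤ t :=
  (qStar_eq_sInf_cdf ρ F).trans_le (csInf_le (bddBelow_le_cdf hρ) ht)

lemma le_cdf_qStar (hρ₀ : 0 < ρ) (hρ₁ : ρ < 1) : ρ ≤ cdf F (qStar ρ F) := by
  have hright : ∀ x ∈ Ioi (qStar ρ F), ρ ≤ cdf F x := fun x hx => by
    rw [mem_Ioi, qStar_eq_sInf_cdf] at hx
    obtain ⟨s, hs, hsx⟩ := (csInf_lt_iff (bddBelow_le_cdf hρ₀) (nonempty_le_cdf hρ₁)).1 hx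
    exact hs.trans (monotone_cdf F hsx.le)
  exact ge_of_tendsto (((cdf F).right_continuous _).tendsto.mono_left
    (nhdsWithin_mono _ Ioi_subset_Ici_self)) (eventually_nhdsWithin_of_forall hright)

lemma le_cdf_iff_qStar_le (hρ₀ : 0 < ρ) (hρ₁ : ρ < 1) {t : ℝ} :
    ρ ≤ cdf F t ↔ qStar ρ F ≤ t :=
  ⟨qStar_le_of_le_cdf hρ₀, fun ht => (le_cdf_qStar hρ₀ hρ₁).trans (monotone_cdf F ht)⟩

end Quantile

section Regret

variable {b h : ℝ} {F F' : Measure ℝ} [IsProbabilityMeasure F] [IsProbabilityMeasure F']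

noncomputable def nvRegret (b h ρ : ℝ) (F : Measure ℝ) (q : ℝ) : ℝ :=
  nvCost b h F q - nvCost b h F (qStar ρ F)

lemma affine_cdf_nonneg_iff (hb : 0 < b) (hh : 0 < h) {t : ℝ} :
    0 ≤ (b + h) * cdf F t - b ↔ qStar (b / (b + h)) F ≤ t := by
  have hbh : 0 < b + h := by positivity
  rw [← le_cdf_iff_qStar_le (by positivity) ((div_lt_one hbh).2 (by linarith)),
    div_le_iff₀ hbh, sub_nonneg, mul_comm]

theorem nvCost_qStar_le (hb : 0 < b) (hh : 0 < h) (hF : Integrable id F) (s : ℝ) :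
    nvCost b h F (qStar (b / (b + h)) F) ≤ nvCost b h F s := by
  rw [← sub_nonneg, nvCost_sub_nvCost b h F hF]
  rcases le_total (qStar (b / (b + h)) F) s with hs | hs
  · exact intervalIntegral.integral_nonneg hs fun t ht =>
      (affine_cdf_nonneg_iff hb hh).2 ht.1
  · rw [intervalIntegral.integral_symm, neg_nonneg]
    refine (intervalIntegral.integral_mono_on_of_le_Ioo hs
      (intervalIntegrable_affine_cdf b h F _ _) intervalIntegrable_const
      fun t ht => ?_).trans_eq intervalIntegral.integral_zero
    exact (not_le.1 fun hpos => ht.2.not_ge ((affine_cdf_nonneg_iff hb hh).1 hpos)).le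

lemma nvCost_sub_le_of_cdf_le (hbh : 0 ≤ b + h) (hF : Integrable id F)
    (hF' : Integrable id F') {a q : ℝ} (haq : a ≤ q)
    (hcdf : ∀ t ∈ Ioo a q, cdf F t ≤ cdf F' t) :
    nvCost b h F q - nvCost b h F a ≤ nvCost b h F' q - nvCost b h F' a := by
  rw [nvCost_sub_nvCost b h F hF, nvCost_sub_nvCost b h F' hF']
  exact intervalIntegral.integral_mono_on_of_le_Ioo haq (intervalIntegrable_affine_cdf b h F _ _)
    (intervalIntegrable_affine_cdf b h F' _ _) fun t ht => by gcongr; exact hcdf t ht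

theorem nvRegret_le_of_cdf_le (hb : 0 < b) (hh : 0 < h) (hF : Integrable id F)
    (hF' : Integrable id F') {q : ℝ} (hq : qStar (b / (b + h)) F ≤ q)
    (hcdf : ∀ t, cdf F t ≤ cdf F' t) :
    nvRegret b h (b / (b + h)) F q ≤ nvRegret b h (b / (b + h)) F' q := by
  have := nvCost_sub_le_of_cdf_le (b := b) (h := h) (by positivity) hF hF' hq fun t _ => hcdf t
  unfold nvRegret
  linarith [nvCost_qStar_le hb hh hF' (qStar (b / (b + h)) F)]

theorem nvRegret_le_of_cdf_ge (hb : 0 < b) (hh : 0 < h) (hF : Integrable id F)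
    (hF' : Integrable id F') {q : ℝ} (hq : q ≤ qStar (b / (b + h)) F)
    (hcdf : ∀ t < qStar (b / (b + h)) F, cdf F' t ≤ cdf F t) :
    nvRegret b h (b / (b + h)) F q ≤ nvRegret b h (b / (b + h)) F' q := by
  have := nvCost_sub_le_of_cdf_le (b := b) (h := h) (by positivity) hF' hF hq
    fun t ht => hcdf t ht.2
  unfold nvRegret
  linarith [nvCost_qStar_le hb hh hF' (qStar (b / (b + h)) F)]

end Regret

lemma measure_Iio_eq_of_forall_measure_Iic_eq {μ ν : Measure ℝ} {a : ℝ}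
    (h : ∀ x < a, μ (Iic x) = ν (Iic x)) : μ (Iio a) = ν (Iio a) := by
  obtain ⟨u, hu_mono, hu_lt, hu_lim⟩ := exists_seq_strictMono_tendsto a
  have hIic : Monotone fun n => Iic (u n) := fun m n hmn => Iic_subset_Iic.2 (hu_mono.monotone hmn)
  rw [← iUnion_Iic_eq_Iio_of_lt_of_tendsto hu_lt hu_lim, hIic.measure_iUnion, hIic.measure_iUnion]
  simp only [h _ (hu_lt _)]

lemma cdf_le_cdf_of_measure_Iic_le {μ ν : Measure ℝ} [IsProbabilityMeasure μ]
    [IsProbabilityMeasure ν] {t : ℝ} (h : μ (Iic t) ≤ ν (Iic t)) : cdf μ t ≤ cdf ν t := by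
  rw [cdf_eq_real, cdf_eq_real]
  exact ENNReal.toReal_mono (measure_ne_top ν _) h

section TwoPointTail

variable {G : Measure ℝ} {lam M p t : ℝ}

lemma Fp_apply {s : Set ℝ} (hs : MeasurableSet s) :
    Fp G lam M p s = G (s ∩ Iio lam) + ENNReal.ofReal p * s.indicator 1 lam
      + ENNReal.ofReal (1 - p - (G (Iio lam)).toReal) * s.indicator 1 M := by
  simp [Fp, Measure.restrict_apply hs, Measure.dirac_apply' _ hs]

lemma Fp_Iic_of_lt (hlamM : lam ≤ M) (ht : t < lam) : Fp G lam M p (Iic t) = G (Iic t) := by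
  rw [Fp_apply measurableSet_Iic, inter_eq_left.2 (Iic_subset_Iio.2 ht)]
  simp [ht.not_ge, (ht.trans_le hlamM).not_ge]

lemma Fp_Iic_of_le_of_lt (hlt : lam ≤ t) (htM : t < M) :
    Fp G lam M p (Iic t) = G (Iio lam) + ENNReal.ofReal p := by
  rw [Fp_apply measurableSet_Iic,
    inter_eq_right.2 (Iio_subset_Iic_self.trans (Iic_subset_Iic.2 hlt))]
  simp [hlt, htM.not_ge]

lemma add_ofReal_le_Fp_Iic (hlt : lam ≤ t) :
    G (Iio lam) + ENNReal.ofReal p ≤ Fp G lam M p (Iic t) := by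
  rw [Fp_apply measurableSet_Iic,
    inter_eq_right.2 (Iio_subset_Iic_self.trans (Iic_subset_Iic.2 hlt))]
  simp [hlt]

lemma integrable_id_Fp (hG : Integrable id G) : Integrable id (Fp G lam M p) :=
  have hdirac (c : ℝ) : Integrable id (Measure.dirac c) := integrable_dirac (by simp)
  (hG.restrict.add_measure ((hdirac lam).smul_measure ENNReal.ofReal_ne_top)).add_measure
    ((hdirac M).smul_measure ENNReal.ofReal_ne_top)

variable [IsProbabilityMeasure G]

lemma Fp_mass (hp : p ∈ Icc 0 (1 - (G (Iio lam)).toReal)) :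
    G (Iio lam) + ENNReal.ofReal p + ENNReal.ofReal (1 - p - (G (Iio lam)).toReal) = 1 := by
  have hg : 0 ≤ (G (Iio lam)).toReal := ENNReal.toReal_nonneg
  calc G (Iio lam) + ENNReal.ofReal p + ENNReal.ofReal (1 - p - (G (Iio lam)).toReal)
      = ENNReal.ofReal ((G (Iio lam)).toReal + p + (1 - p - (G (Iio lam)).toReal)) := by
        rw [ENNReal.ofReal_add (by linarith [hp.1]) (by linarith [hp.2]),
          ENNReal.ofReal_add hg hp.1, ENNReal.ofReal_toReal (measure_ne_top G _)]
    _ = 1 := by ring_nf; exact ENNReal.ofReal_one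

lemma isProbabilityMeasure_Fp (hp : p ∈ Icc 0 (1 - (G (Iio lam)).toReal)) :
    IsProbabilityMeasure (Fp G lam M p) := by
  constructor
  rw [Fp_apply MeasurableSet.univ]
  simpa using Fp_mass hp

lemma Fp_Iic_of_le (hp : p ∈ Icc 0 (1 - (G (Iio lam)).toReal)) (hlamM : lam ≤ M)
    (ht : M ≤ t) : Fp G lam M p (Iic t) = 1 := by
  rw [Fp_apply measurableSet_Iic,
    inter_eq_right.2 (Iio_subset_Iic_self.trans (Iic_subset_Iic.2 (hlamM.trans ht)))]
  simpa [ht, hlamM.trans ht] using Fp_mass hp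

end TwoPointTail

section TwoPointTailAmbiguity

variable {ρ M lam : ℝ} {G F : Measure ℝ}

lemma Fp_mem_Ambig (hG : G ∈ GoodDist ρ M) (hρ₀ : 0 < ρ) (hρ₁ : ρ ≤ 1) (hlam : 0 ≤ lam)
    (hlamM : lam ≤ M) {p : ℝ} (hp : p ∈ Icc 0 (1 - (G (Iio lam)).toReal)) :
    Fp G lam M p ∈ Ambig ρ M G lam := by
  have := hG.1
  have hFp := isProbabilityMeasure_Fp (M := M) hp
  have hIio : Fp G lam M p (Iio 0) = 0 := by
    rw [Fp_apply measurableSet_Iio]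
    simpa [hlam.not_gt, (hlam.trans hlamM).not_gt] using
      measure_mono_null (Iio_subset_Iio (min_le_left 0 lam)) hG.2.1
  have hcdfM : cdf (Fp G lam M p) M = 1 := by
    rw [cdf_eq_real, measureReal_def, Fp_Iic_of_le hp hlamM le_rfl, ENNReal.toReal_one]
  exact ⟨⟨hFp, hIio, integrable_id_Fp hG.2.2.1, qStar_le_of_le_cdf hρ₀ (hcdfM ▸ hρ₁)⟩,
    fun x hx => Fp_Iic_of_lt hlamM hx⟩

lemma measure_Iic_le_Fp_Iic [IsProbabilityMeasure G] [IsProbabilityMeasure F]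
    (hFG : ∀ x < lam, F (Iic x) = G (Iic x)) (hlamM : lam ≤ M) (t : ℝ) :
    F (Iic t) ≤ Fp G lam M (1 - (G (Iio lam)).toReal) (Iic t) := by
  rcases lt_or_ge t lam with ht | ht
  · rw [Fp_Iic_of_lt hlamM ht, hFG t ht]
  · calc F (Iic t) ≤ 1 := prob_le_one
      _ = G (Iio lam) + ENNReal.ofReal (1 - (G (Iio lam)).toReal) := by
        simpa using (Fp_mass (lam := lam) (p := 1 - (G (Iio lam)).toReal)
          ⟨sub_nonneg.2 measureReal_le_one, le_rfl⟩).symm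
      _ ≤ _ := add_ofReal_le_Fp_Iic ht

lemma Fp_zero_Iic_le (hFG : ∀ x < lam, F (Iic x) = G (Iic x)) (hlamM : lam ≤ M) {t : ℝ}
    (htM : t < M) : Fp G lam M 0 (Iic t) ≤ F (Iic t) := by
  rcases lt_or_ge t lam with ht | ht
  · rw [Fp_Iic_of_lt hlamM ht, hFG t ht]
  · rw [Fp_Iic_of_le_of_lt ht htM, ENNReal.ofReal_zero, add_zero,
      ← measure_Iio_eq_of_forall_measure_Iic_eq hFG]
    exact measure_mono (Iio_subset_Iic_self.trans (Iic_subset_Iic.2 ht))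

end TwoPointTailAmbiguity

theorem stmt7_general (b h M lam ρ : ℝ) (hb : 0 < b) (hh : 0 < h)
    (hlam : 0 ≤ lam) (hlamM : lam ≤ M) (hρ : ρ = b / (b + h))
    (G : Measure ℝ) (hG : G ∈ GoodDist ρ M)
    (q : ℝ) :
    Regret b h ρ M G lam q =
      sSup ((fun F => nvCost b h F q - nvCost b h F (qStar ρ F)) ''
        {F | ∃ p ∈ Icc (0 : ℝ) (1 - (G (Iio lam)).toReal), F = Fp G lam M p}) := by
  subst hρ
  have := hG.1
  have hρ₀ : 0 < b / (b + h) := by positivity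
  have hρ₁ : b / (b + h) ≤ 1 := (div_le_one (by positivity)).2 (by linarith)
  have hG₁ : (G (Iio lam)).toReal ≤ 1 := measureReal_le_one
  have hGint : Integrable id G := hG.2.2.1
  apply csSup_eq_csSup_of_forall_exists_le
  · rintro _ ⟨F, ⟨⟨hFprob, -, hFint, hFM⟩, hFG⟩, rfl⟩
    rcases le_or_gt (qStar (b / (b + h)) F) q with hq | hq
    · have hp : 1 - (G (Iio lam)).toReal ∈ Icc 0 (1 - (G (Iio lam)).toReal) :=
        ⟨sub_nonneg.2 hG₁, le_rfl⟩
      have := isProbabilityMeasure_Fp (M := M) hp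
      refine ⟨_, ⟨_, ⟨_, hp, rfl⟩, rfl⟩, nvRegret_le_of_cdf_le hb hh hFint (integrable_id_Fp hGint)
        hq fun t => ?_⟩
      exact cdf_le_cdf_of_measure_Iic_le (measure_Iic_le_Fp_Iic hFG hlamM t)
    · have hp : (0 : ℝ) ∈ Icc 0 (1 - (G (Iio lam)).toReal) := ⟨le_rfl, sub_nonneg.2 hG₁⟩
      have := isProbabilityMeasure_Fp (M := M) hp
      refine ⟨_, ⟨_, ⟨_, hp, rfl⟩, rfl⟩, nvRegret_le_of_cdf_ge hb hh hFint (integrable_id_Fp hGint)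
        hq.le fun t ht => ?_⟩
      exact cdf_le_cdf_of_measure_Iic_le (Fp_zero_Iic_le hFG hlamM (ht.trans_le hFM))
  · rintro _ ⟨_, ⟨p, hp, rfl⟩, rfl⟩
    exact ⟨_, ⟨_, Fp_mem_Ambig hG hρ₀ hρ₁ hlam hlamM hp, rfl⟩, le_rfl⟩

/-- for every fixed `q ∈ [0, M]`, the worst-case regret over the ambiguity set
equals the worst-case regret over the restricted ambiguity set `ℬ_λ = {F_p}`. -/
theorem stmt7 (b h M lam ρ : ℝ) (hb : 0 < b) (hh : 0 < h) (hM : 0 < M)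
    (hlam : 0 ≤ lam) (hlamM : lam ≤ M) (hρ : ρ = b / (b + h))
    (G : Measure ℝ) (hG : G ∈ GoodDist ρ M)
    (q : ℝ) (hq : q ∈ Icc (0 : ℝ) M) :
    Regret b h ρ M G lam q =
      sSup ((fun F => nvCost b h F q - nvCost b h F (qStar ρ F)) ''
        {F | ∃ p ∈ Icc (0 : ℝ) (1 - (G (Iio lam)).toReal), F = Fp G lam M p}) :=
  stmt7_general b h M lam ρ hb hh hlam hlamM hρ G hG q
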